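/- For positive definite density matrices ρ₁₂, σ₁₂ on H₁ ⊗ H₂ with marginals ρ₁, σ₁, set Δ = (1/2)D(ρ₁₂‖σ₁₂) − (1/2)D(ρ₁‖σ₁). Then e^{−Δ} ≤ Tr[√ρ₁₂ · exp{(1/2) ln σ₁₂ − (1/2) ln(σ₁ ⊗ I₂) + (1/2) ln(ρ₁ ⊗ I₂)}]. -/

import Mathlib

open Matrix Kronecker
open scoped ComplexOrder

noncomputable def mexp {n : Type*} [Fintype n] [DecidableEq n] (A : Matrix n n ℂ) : Matrix n n ℂ :=
  if h : A.IsHermitian then h.cfc Real.exp else 0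

noncomputable def mlog {n : Type*} [Fintype n] [DecidableEq n] (A : Matrix n n ℂ) : Matrix n n ℂ :=
  if h : A.IsHermitian then h.cfc Real.log else 0

open scoped Classical in
noncomputable def msqrt {n : Type*} [Fintype n] [DecidableEq n] (A : Matrix n n ℂ) : Matrix n n ℂ :=
  if h : A.PosSemidef then h.1.cfc Real.sqrt else 0

noncomputable def entropy {n : Type*} [Fintype n] [DecidableEq n] (ρ : Matrix n n ℂ) : ℝ :=
  -((ρ * mlog ρ).trace.re)

noncomputable def relEnt {n : Type*} [Fintype n] [DecidableEq n] (ρ σ : Matrix n n ℂ) : ℝ :=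
  ((ρ * (mlog ρ - mlog σ)).trace.re)

noncomputable def ptrace₂ {n m : Type*} [Fintype n] [Fintype m]
    (ρ : Matrix (n × m) (n × m) ℂ) : Matrix n n ℂ :=
  Matrix.of fun i j => ∑ k, ρ (i, k) (j, k)

noncomputable def ptrace₁ {n m : Type*} [Fintype n] [Fintype m]
    (ρ : Matrix (n × m) (n × m) ℂ) : Matrix m m ℂ :=
  Matrix.of fun i j => ∑ k, ρ (k, i) (k, j)

noncomputable def traceNorm {n : Type*} [Fintype n] [DecidableEq n] (A : Matrix n n ℂ) : ℝ :=
  ((Matrix.posSemidef_conjTranspose_mul_self A).1.cfc Real.sqrt).trace.re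

/-!
Diagonalize `ρ = ∑ pᵢ |uᵢ⟩⟨uᵢ|` and a Hermitian `G = ∑ gⱼ |vⱼ⟩⟨vⱼ|`, and put `cᵢⱼ = |⟨uᵢ, vⱼ⟩|²`.
The numbers `pᵢ cᵢⱼ` form a probability distribution, and Jensen's inequality for `exp` at the
points `gⱼ - ½ log pᵢ` reads `exp (Tr ρG - ½ Tr ρ log ρ) ≤ Tr √ρ e^G`.
For `G = ½ ln σ₁₂ - ½ ln (σ₁ ⊗ I) + ½ ln (ρ₁ ⊗ I)` we have `ln (X ⊗ I) = ln X ⊗ I` and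
`Tr ρ₁₂ (X ⊗ I) = Tr ρ₁ X`, so the exponent on the left is exactly `-Δ`.
-/

namespace Real

lemma mul_exp_sub_log_div_two {x : ℝ} (hx : 0 < x) (y : ℝ) :
    x * exp (y - log x / 2) = √x * exp y := by
  rw [exp_sub, ← log_sqrt hx.le, exp_log (sqrt_pos.2 hx), mul_div_assoc',
    div_eq_iff (sqrt_pos.2 hx).ne', mul_right_comm, mul_self_sqrt hx.le]

theorem exp_sum_mul_sub_half_sum_mul_log_le {ι κ : Type*} [Fintype ι] [Fintype κ]
    {p : ι → ℝ} {c : ι → κ → ℝ} (g : κ → ℝ) (hp : ∀ i, 0 < p i) (hp1 : ∑ i, p i = 1)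
    (hc : ∀ i j, 0 ≤ c i j) (hc1 : ∀ i, ∑ j, c i j = 1) :
    exp (∑ i, ∑ j, p i * g j * c i j - 1 / 2 * ∑ i, p i * log (p i)) ≤
      ∑ i, ∑ j, √(p i) * exp (g j) * c i j := by
  let w : ι × κ → ℝ := fun q ↦ p q.1 * c q.1 q.2
  let t : ι × κ → ℝ := fun q ↦ g q.2 - log (p q.1) / 2
  have hw : ∑ q, w q = 1 := by
    simp only [w, Fintype.sum_prod_type, ← Finset.mul_sum, hc1, mul_one, hp1]
  have jensen := convexOn_exp.map_sum_le (t := Finset.univ) (p := t)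
    (fun q _ ↦ mul_nonneg (hp q.1).le (hc q.1 q.2)) hw (fun q _ ↦ Set.mem_univ _)
  simp only [smul_eq_mul] at jensen
  calc exp (∑ i, ∑ j, p i * g j * c i j - 1 / 2 * ∑ i, p i * log (p i))
      = exp (∑ q, w q * t q) := by
        congr 1
        simp only [w, t, Fintype.sum_prod_type, mul_sub, Finset.sum_sub_distrib, Finset.mul_sum]
        congr 1
        · exact Finset.sum_congr rfl fun i _ ↦ Finset.sum_congr rfl fun j _ ↦ by ring
        · refine Finset.sum_congr rfl fun i _ ↦ ?_
          rw [← Finset.sum_mul, ← Finset.mul_sum, hc1, mul_one]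
          ring
    _ ≤ ∑ q, w q * exp (t q) := jensen
    _ = ∑ i, ∑ j, √(p i) * exp (g j) * c i j := by
        simp only [w, t, Fintype.sum_prod_type]
        refine Finset.sum_congr rfl fun i _ ↦ Finset.sum_congr rfl fun j _ ↦ ?_
        rw [mul_right_comm, mul_exp_sub_log_div_two (hp i)]

end Real

namespace Matrix

section Spectral

variable {d : Type*} [Fintype d] [DecidableEq d]

lemma sum_normSq_apply_eq_one_of_mem_unitaryGroup {U : Matrix d d ℂ}
    (hU : U ∈ unitaryGroup d ℂ) (i : d) : ∑ j, Complex.normSq (U i j) = 1 := by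
  have h := congr_fun₂ ((mem_unitaryGroup_iff).mp hU) i i
  rw [mul_apply, one_apply_eq] at h
  exact_mod_cast
    (by simpa [Complex.mul_conj] using h : ((∑ j, Complex.normSq (U i j) : ℝ) : ℂ) = 1)

lemma trace_diagonal_mul_conj_diagonal (a b : d → ℝ) (N : Matrix d d ℂ) :
    (diagonal (fun i ↦ (a i : ℂ)) * (N * diagonal (fun j ↦ (b j : ℂ)) * star N)).trace =
      ((∑ i, ∑ j, a i * b j * Complex.normSq (N i j) : ℝ) : ℂ) := by
  push_cast
  refine Finset.sum_congr rfl fun i _ ↦ ?_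
  rw [diag_apply, diagonal_mul, mul_apply, Finset.mul_sum]
  refine Finset.sum_congr rfl fun j _ ↦ ?_
  rw [mul_diagonal, star_apply, ← Complex.mul_conj, RCLike.star_def]
  ring

lemma trace_conjStarAlgAut (U : unitaryGroup d ℂ) (X : Matrix d d ℂ) :
    (Unitary.conjStarAlgAut ℂ _ U X).trace = X.trace := by
  rw [Unitary.conjStarAlgAut_apply, trace_mul_cycle, Unitary.coe_star_mul_self, one_mul]

namespace IsHermitian

variable {A B : Matrix d d ℂ}

lemma cfc_id (hA : A.IsHermitian) : hA.cfc id = A := by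
  rw [← hA.cfc_eq, _root_.cfc_id ℝ A hA.isSelfAdjoint]

lemma cfc_mul (hA : A.IsHermitian) (f g : ℝ → ℝ) : hA.cfc f * hA.cfc g = hA.cfc (f * g) := by
  simp only [← hA.cfc_eq]
  exact (_root_.cfc_mul f g A (A.finite_real_spectrum.continuousOn f)
    (A.finite_real_spectrum.continuousOn g)).symm

lemma trace_cfc (hA : A.IsHermitian) (f : ℝ → ℝ) :
    (hA.cfc f).trace = ∑ i, (f (hA.eigenvalues i) : ℂ) := by
  rw [IsHermitian.cfc, trace_conjStarAlgAut, trace_diagonal]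
  rfl

lemma trace_cfc_mul_cfc (hA : A.IsHermitian) (hB : B.IsHermitian) (f g : ℝ → ℝ) :
    (hA.cfc f * hB.cfc g).trace =
      ((∑ i, ∑ j, f (hA.eigenvalues i) * g (hB.eigenvalues j) *
        Complex.normSq ((star hA.eigenvectorUnitary * hB.eigenvectorUnitary :
          unitaryGroup d ℂ) i j) : ℝ) : ℂ) := by
  have hV : hB.eigenvectorUnitary =
      hA.eigenvectorUnitary * (star hA.eigenvectorUnitary * hB.eigenvectorUnitary) := by
    rw [← mul_assoc, Unitary.mul_star_self, one_mul]
  conv_lhs =>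
    rw [IsHermitian.cfc, IsHermitian.cfc, hV, Unitary.conjStarAlgAut_mul_apply, ← map_mul,
      trace_conjStarAlgAut, Unitary.conjStarAlgAut_apply]
  exact trace_diagonal_mul_conj_diagonal _ _ _

end IsHermitian

lemma mlog_isHermitian (A : Matrix d d ℂ) : (mlog A).IsHermitian := by
  unfold mlog
  split_ifs with hA
  · rw [← hA.cfc_eq]
    exact cfc_predicate Real.log A
  · exact isHermitian_zero

open Real in
theorem exp_trace_mul_sub_half_trace_mul_mlog_le {ρ G : Matrix d d ℂ} (hρ : ρ.PosDef)
    (hρ1 : ρ.trace = 1) (hG : G.IsHermitian) :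
    exp ((ρ * G).trace.re - 1 / 2 * (ρ * mlog ρ).trace.re) ≤ (msqrt ρ * mexp G).trace.re := by
  set p := hρ.1.eigenvalues
  set g := hG.eigenvalues
  set N : unitaryGroup d ℂ := star hρ.1.eigenvectorUnitary * hG.eigenvectorUnitary
  have hp1 : ∑ i, p i = 1 := by
    have h : ((∑ i, p i : ℝ) : ℂ) = 1 := by
      push_cast
      exact hρ.1.trace_eq_sum_eigenvalues.symm.trans hρ1
    exact_mod_cast h
  have hρG : (ρ * G).trace.re = ∑ i, ∑ j, p i * g j * Complex.normSq (N i j) := by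
    conv_lhs => rw [← hρ.1.cfc_id, ← hG.cfc_id]
    rw [hρ.1.trace_cfc_mul_cfc, Complex.ofReal_re]
    rfl
  have hρlogρ : (ρ * mlog ρ).trace.re = ∑ i, p i * log (p i) := by
    have h : ρ * mlog ρ = hρ.1.cfc (id * log) := by
      rw [mlog, dif_pos hρ.1, ← hρ.1.cfc_mul, hρ.1.cfc_id]
    rw [h, hρ.1.trace_cfc, Complex.re_sum]
    rfl
  have hsqrt : (msqrt ρ * mexp G).trace.re =
      ∑ i, ∑ j, √(p i) * exp (g j) * Complex.normSq (N i j) := by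
    rw [msqrt, dif_pos hρ.posSemidef, mexp, dif_pos hG, hρ.1.trace_cfc_mul_cfc, Complex.ofReal_re]
  rw [hρG, hρlogρ, hsqrt]
  exact exp_sum_mul_sub_half_sum_mul_log_le g hρ.eigenvalues_pos hp1
    (fun _ _ ↦ Complex.normSq_nonneg _) (sum_normSq_apply_eq_one_of_mem_unitaryGroup N.2)

end Spectral

section Kronecker

variable {n m : Type*} [Fintype n] [Fintype m]

variable (m) in
def kroneckerOneStarAlgHom [DecidableEq n] [DecidableEq m] (R : Type*) [CommSemiring R]
    [StarRing R] :
    Matrix n n R →⋆ₐ[R] Matrix (n × m) (n × m) R where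
  toFun X := X ⊗ₖ (1 : Matrix m m R)
  map_one' := one_kronecker_one
  map_mul' X Y := by rw [← mul_kronecker_mul, one_mul]
  map_zero' := zero_kronecker 1
  map_add' X Y := add_kronecker X Y 1
  commutes' r := by simp only [Algebra.algebraMap_eq_smul_one, smul_kronecker, one_kronecker_one]
  map_star' X := by simp only [star_eq_conjTranspose, conjTranspose_kronecker, conjTranspose_one]

lemma mlog_kronecker_one [DecidableEq n] [DecidableEq m] {A : Matrix n n ℂ}
    (hA : A.IsHermitian) :
    mlog (A ⊗ₖ (1 : Matrix m m ℂ)) = mlog A ⊗ₖ (1 : Matrix m m ℂ) := by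
  let φ := kroneckerOneStarAlgHom m ℂ (n := n)
  have hφA : (A ⊗ₖ (1 : Matrix m m ℂ)).IsHermitian := hA.isSelfAdjoint.map φ
  rw [mlog, mlog, dif_pos hA, dif_pos hφA, ← hA.cfc_eq, ← hφA.cfc_eq]
  exact (StarAlgHomClass.map_cfc φ Real.log A (A.finite_real_spectrum.continuousOn _)
    (LinearMap.continuous_of_finiteDimensional φ.toAlgHom.toLinearMap)).symm

lemma ptrace₂_isHermitian {ρ : Matrix (n × m) (n × m) ℂ} (hρ : ρ.IsHermitian) :
    (ptrace₂ ρ).IsHermitian := by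
  ext i j
  simp only [conjTranspose_apply, ptrace₂, of_apply, star_sum]
  exact Finset.sum_congr rfl fun k _ ↦ hρ.apply (i, k) (j, k)

lemma trace_mul_kronecker_one [DecidableEq m] (ρ : Matrix (n × m) (n × m) ℂ) (X : Matrix n n ℂ) :
    (ρ * (X ⊗ₖ (1 : Matrix m m ℂ))).trace = (ptrace₂ ρ * X).trace := by
  simp only [trace, diag_apply, mul_apply, ptrace₂, of_apply, kroneckerMap_apply, one_apply,
    Fintype.sum_prod_type, mul_ite, mul_one, mul_zero, Finset.sum_ite_eq', Finset.mem_univ,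
    if_true, Finset.sum_mul]
  exact Finset.sum_congr rfl fun i _ ↦ Finset.sum_comm

end Kronecker

end Matrix

theorem stmt19_general {n m : Type*} [Fintype n] [DecidableEq n] [Fintype m] [DecidableEq m]
    (ρ₁₂ σ₁₂ : Matrix (n × m) (n × m) ℂ) (hρ : ρ₁₂.PosDef) (hσ : σ₁₂.PosDef)
    (htρ : ρ₁₂.trace = 1) :
    Real.exp (-((1/2) * relEnt ρ₁₂ σ₁₂ - (1/2) * relEnt (ptrace₂ ρ₁₂) (ptrace₂ σ₁₂))) ≤
      (msqrt ρ₁₂ *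
        mexp ((1/2 : ℂ) • mlog σ₁₂ -
          (1/2 : ℂ) • mlog (ptrace₂ σ₁₂ ⊗ₖ (1 : Matrix m m ℂ)) +
          (1/2 : ℂ) • mlog (ptrace₂ ρ₁₂ ⊗ₖ (1 : Matrix m m ℂ)))).trace.re := by
  have hhalf : IsSelfAdjoint (1 / 2 : ℂ) := by simp [IsSelfAdjoint]
  refine le_of_eq_of_le ?_ (exp_trace_mul_sub_half_trace_mul_mlog_le hρ htρ
    ((((mlog_isHermitian _).smul hhalf).sub ((mlog_isHermitian _).smul hhalf)).add
      ((mlog_isHermitian _).smul hhalf)))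
  rw [mlog_kronecker_one (ptrace₂_isHermitian hσ.1),
    mlog_kronecker_one (ptrace₂_isHermitian hρ.1)]
  simp only [relEnt, Matrix.mul_add, Matrix.mul_sub, Matrix.mul_smul, trace_add, trace_sub,
    trace_smul, trace_mul_kronecker_one, Complex.add_re, Complex.sub_re, smul_eq_mul,
    Complex.mul_re, Complex.div_ofNat_re, Complex.div_ofNat_im, Complex.one_re, Complex.one_im,
    zero_div, zero_mul, sub_zero]
  congr 1
  ring

theorem stmt19 {n m : Type*} [Fintype n] [DecidableEq n] [Fintype m] [DecidableEq m]
    (ρ₁₂ σ₁₂ : Matrix (n × m) (n × m) ℂ) (hρ : ρ₁₂.PosDef) (hσ : σ₁₂.PosDef)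
    (htρ : ρ₁₂.trace = 1) (htσ : σ₁₂.trace = 1) :
    Real.exp (-((1/2) * relEnt ρ₁₂ σ₁₂ - (1/2) * relEnt (ptrace₂ ρ₁₂) (ptrace₂ σ₁₂))) ≤
      (msqrt ρ₁₂ *
        mexp ((1/2 : ℂ) • mlog σ₁₂ -
          (1/2 : ℂ) • mlog (ptrace₂ σ₁₂ ⊗ₖ (1 : Matrix m m ℂ)) +
          (1/2 : ℂ) • mlog (ptrace₂ ρ₁₂ ⊗ₖ (1 : Matrix m m ℂ)))).trace.re :=
  stmt19_general ρ₁₂ σ₁₂ hρ hσ htρ
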